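/- arXiv:2006.03651 — 2 statements merged into one kernel-verified Lean document; each statement's English description precedes it below -/
import Mathlib

section
/- Let K₀ ∈ [0,1]^m and K̄₀ ∈ ℝ^m be such that K̄₀ is either the zero vector or a standard basis vector (one-hot). Define readings R, R̄ ∈ ℝ^{m+1} by R_i = (K₀)_i for i < m and R_m = 1 − ‖K₀‖_∞, and similarly for R̄ from K̄₀. Then ‖K₀ − K̄₀‖_∞ = ‖R − R̄‖_∞. -/
theorem stack_reading_equivalence {m : ℕ} (K₀ Kbar₀ : Fin m → ℝ)
    (hK : ∀ i, K₀ i ∈ Set.Icc (0:ℝ) 1)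
    (hKbar : Kbar₀ = 0 ∨ ∃ j, Kbar₀ = Pi.single j 1) :
    ‖K₀ - Kbar₀‖ =
      ‖(Fin.snoc K₀ (1 - ‖K₀‖) : Fin (m + 1) → ℝ) -
       (Fin.snoc Kbar₀ (1 - ‖Kbar₀‖) : Fin (m + 1) → ℝ)‖ := by
  set R := (Fin.snoc K₀ (1 - ‖K₀‖) : Fin (m + 1) → ℝ)
  set Rb := (Fin.snoc Kbar₀ (1 - ‖Kbar₀‖) : Fin (m + 1) → ℝ)
  apply le_antisymm
  · apply pi_norm_le_iff_of_nonneg (norm_nonneg _) |>.2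
    intro i
    have : (K₀ - Kbar₀) i = (R - Rb) (Fin.castSucc i) := by
      simp [R, Rb]
    rw [this]
    exact norm_le_pi_norm (R - Rb) _
  · apply pi_norm_le_iff_of_nonneg (norm_nonneg _) |>.2
    intro i
    refine Fin.lastCases ?_ ?_ i
    · have h : (R - Rb) (Fin.last m) = ‖Kbar₀‖ - ‖K₀‖ := by
        simp [R, Rb]
      rw [h, Real.norm_eq_abs, abs_sub_comm]
      exact abs_norm_sub_norm_le _ _
    · intro j
      have : (R - Rb) (Fin.castSucc j) = (K₀ - Kbar₀) j := by
        simp [R, Rb]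
      rw [this]
      exact norm_le_pi_norm (K₀ - Kbar₀) _
end

section
/- Let K : ℕ → [0,1]^m and K̄ : ℕ → ℝ^m with each K̄_i either one-hot or zero, and sup_i ‖K_i − K̄_i‖_∞ ≤ ε. Let (p̄₊,p̄₋) ∈ {(1,0),(0,1),(0,0)}, C̄ one-hot, and suppose |p₊−p̄₊| ≤ ε, |p₋−p̄₋| ≤ ε, ‖C−C̄‖_∞ ≤ ε with p₊, p₋ ∈ [0,1], C ∈ [0,1]^m. Define the differentiable operator π(p₊,p₋,C) componentwise by ((πK)_i)_j = h_H(p₊(K_{i−1})_j + p₋(K_{i+1})_j + (1−p₊−p₋)(K_i)_j − 1/2) for i ≥ 1, and with K_{i−1} replaced by C at i = 0. Then for ε < 1/14, there exists H (depending only on ε) such that sup_i ‖(π(p₊,p₋,C)K)_i − (π̄(p̄₊,p̄₋,C̄)K̄)_i‖_∞ ≤ ε. -/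
noncomputable def hH (H x : ℝ) : ℝ := 1 / (1 + Real.exp (-H * x))

noncomputable def piBar {m : ℕ} (p q : ℝ) (C : Fin m → ℝ)
    (K : ℕ → Fin m → ℝ) : ℕ → Fin m → ℝ
  | 0 => p • C + q • K 1 + (1 - p - q) • K 0
  | (n + 1) => p • K n + q • K (n + 2) + (1 - p - q) • K (n + 1)

noncomputable def piOp {m : ℕ} (H p q : ℝ) (C : Fin m → ℝ)
    (K : ℕ → Fin m → ℝ) : ℕ → Fin m → ℝ
  | 0 => fun j => hH H (p * C j + q * K 1 j + (1 - p - q) * K 0 j - 1 / 2)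
  | (n + 1) => fun j =>
      hH H (p * K n j + q * K (n + 2) j + (1 - p - q) * K (n + 1) j - 1 / 2)


lemma key_lemma (ε H x a : ℝ) (hε : 0 < ε) (hε' : ε < 1/14)
    (hHdef : H = Real.log (1/ε) / (1/2 - 7*ε))
    (ha : a = 0 ∨ a = 1) (hx : |x - (a - 1/2)| ≤ 7*ε) :
    |hH H x - a| ≤ ε := by
  have hδ : 0 < 1/2 - 7*ε := by linarith
  have hlog : 0 < Real.log (1/ε) := Real.log_pos (by rw [lt_div_iff₀ hε]; linarith)
  have hH0 : 0 < H := by rw [hHdef]; exact div_pos hlog hδ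
  have hHδ : H * (1/2 - 7*ε) = Real.log (1/ε) := by
    rw [hHdef, div_mul_cancel₀ _ (ne_of_gt hδ)]
  set t := Real.exp (-H * x) with ht_def
  have ht0 : 0 < t := Real.exp_pos _
  have h1t : 0 < 1 + t := by linarith
  have hhH : hH H x = 1/(1+t) := rfl
  rw [abs_le] at hx
  rcases ha with rfl | rfl
  · -- a = 0, x ≤ -(1/2 - 7ε)
    have hxle : x ≤ -(1/2 - 7*ε) := by linarith [hx.2]
    have htge : 1/ε ≤ t := by
      have : Real.log (1/ε) ≤ -H * x := by
        rw [← hHδ]; nlinarith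
      calc 1/ε = Real.exp (Real.log (1/ε)) := (Real.exp_log (by positivity)).symm
        _ ≤ t := Real.exp_le_exp.mpr this
    have h1 : 1 ≤ ε * t := by
      rw [div_le_iff₀ hε] at htge; linarith [htge]
    rw [hhH, abs_le]
    constructor
    · have : 0 ≤ 1/(1+t) := by positivity
      linarith
    · rw [sub_zero, div_le_iff₀ h1t]; nlinarith
  · -- a = 1, x ≥ 1/2 - 7ε
    have hxge : 1/2 - 7*ε ≤ x := by linarith [hx.1]
    have htle : t ≤ ε := by
      have : -H * x ≤ Real.log ε := by
        rw [show Real.log ε = -Real.log (1/ε) by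
          rw [one_div, Real.log_inv]; ring, ← hHδ]
        nlinarith
      calc t ≤ Real.exp (Real.log ε) := Real.exp_le_exp.mpr this
        _ = ε := Real.exp_log hε
    rw [hhH, abs_le]
    constructor
    · rw [le_sub_iff_add_le, le_div_iff₀ h1t]; nlinarith
    · have : 1/(1+t) ≤ 1 := by rw [div_le_one h1t]; linarith
      linarith

lemma component_lemma (ε H p q pb qb A B D Ab Bb Db : ℝ)
    (hε : 0 < ε) (hε' : ε < 1/14)
    (hHdef : H = Real.log (1/ε) / (1/2 - 7*ε))
    (hpb : pb = 1 ∧ qb = 0 ∨ pb = 0 ∧ qb = 1 ∨ pb = 0 ∧ qb = 0)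
    (hA : A ∈ Set.Icc (0:ℝ) 1) (hB : B ∈ Set.Icc (0:ℝ) 1) (hD : D ∈ Set.Icc (0:ℝ) 1)
    (hAb : Ab = 0 ∨ Ab = 1) (hBb : Bb = 0 ∨ Bb = 1) (hDb : Db = 0 ∨ Db = 1)
    (hp : p ∈ Set.Icc (0:ℝ) 1) (hq : q ∈ Set.Icc (0:ℝ) 1)
    (hpd : |p - pb| ≤ ε) (hqd : |q - qb| ≤ ε)
    (hAd : |A - Ab| ≤ ε) (hBd : |B - Bb| ≤ ε) (hDd : |D - Db| ≤ ε) :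
    |hH H (p*A + q*B + (1-p-q)*D - 1/2) - (pb*Ab + qb*Bb + (1-pb-qb)*Db)| ≤ ε := by
  obtain ⟨hA0, hA1⟩ := hA; obtain ⟨hB0, hB1⟩ := hB; obtain ⟨hD0, hD1⟩ := hD
  obtain ⟨hp0, hp1⟩ := hp; obtain ⟨hq0, hq1⟩ := hq
  rw [abs_le] at hpd hqd hAd hBd hDd
  rcases hpb with ⟨rfl, rfl⟩ | ⟨rfl, rfl⟩ | ⟨rfl, rfl⟩
  · have hval : (1:ℝ)*Ab + 0*Bb + (1-1-0)*Db = Ab := by ring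
    rw [hval]
    apply key_lemma ε H _ Ab hε hε' hHdef hAb
    rw [abs_le]; constructor <;> nlinarith
  · have hval : (0:ℝ)*Ab + 1*Bb + (1-0-1)*Db = Bb := by ring
    rw [hval]
    apply key_lemma ε H _ Bb hε hε' hHdef hBb
    rw [abs_le]; constructor <;> nlinarith
  · have hval : (0:ℝ)*Ab + 0*Bb + (1-0-0)*Db = Db := by ring
    rw [hval]
    apply key_lemma ε H _ Db hε hε' hHdef hDb
    rw [abs_le]; constructor <;> nlinarith
theorem piOp_approximates_piBar {m : ℕ} (ε : ℝ) (hε : 0 < ε) (hε' : ε < 1 / 14) :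
    ∃ H : ℝ, ∀ (K Kbar : ℕ → Fin m → ℝ) (pPlus pMinus pbarPlus pbarMinus : ℝ)
      (C Cbar : Fin m → ℝ),
      (∀ i j, K i j ∈ Set.Icc (0:ℝ) 1) →
      (∀ i, (∃ j, Kbar i = Pi.single j 1) ∨ Kbar i = 0) →
      (∀ i, ‖K i - Kbar i‖ ≤ ε) →
      ((pbarPlus, pbarMinus) = ((1:ℝ), (0:ℝ)) ∨ (pbarPlus, pbarMinus) = ((0:ℝ), (1:ℝ)) ∨
        (pbarPlus, pbarMinus) = ((0:ℝ), (0:ℝ))) →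
      (∃ j, Cbar = Pi.single j 1) →
      pPlus ∈ Set.Icc (0:ℝ) 1 → pMinus ∈ Set.Icc (0:ℝ) 1 →
      (∀ j, C j ∈ Set.Icc (0:ℝ) 1) →
      |pPlus - pbarPlus| ≤ ε → |pMinus - pbarMinus| ≤ ε → ‖C - Cbar‖ ≤ ε →
      ∀ i, ‖piOp H pPlus pMinus C K i - piBar pbarPlus pbarMinus Cbar Kbar i‖ ≤ ε := by
  refine ⟨Real.log (1/ε) / (1/2 - 7*ε), ?_⟩
  intro K Kbar p q pb qb C Cbar hK hKb hKd hbar hCb hp hq hC hpd hqd hCd i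
  have hε14 : ε < 1/14 := by linarith
  -- componentwise bounds
  have hKc : ∀ i j, |K i j - Kbar i j| ≤ ε := fun i j =>
    le_trans (by simpa using norm_le_pi_norm (K i - Kbar i) j) (hKd i)
  have hCc : ∀ j, |C j - Cbar j| ≤ ε := fun j =>
    le_trans (by simpa using norm_le_pi_norm (C - Cbar) j) hCd
  have hsingle : ∀ (f : Fin m → ℝ), (∃ j, f = Pi.single j 1) ∨ f = 0 →
      ∀ j, f j = 0 ∨ f j = 1 := by
    rintro f (⟨j0, rfl⟩ | rfl) j
    · by_cases h : j = j0
      · subst h; right; simp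
      · left; simp [Pi.single_eq_of_ne h]
    · left; rfl
  have hKbv : ∀ i j, Kbar i j = 0 ∨ Kbar i j = 1 := fun i => hsingle _ (hKb i)
  have hCbv : ∀ j, Cbar j = 0 ∨ Cbar j = 1 := hsingle _ (Or.inl hCb)
  have hpbv : pb = 1 ∧ qb = 0 ∨ pb = 0 ∧ qb = 1 ∨ pb = 0 ∧ qb = 0 := by
    rcases hbar with h | h | h <;> [left; (right; left); (right; right)] <;>
      exact ⟨congrArg Prod.fst h, congrArg Prod.snd h⟩
  rw [pi_norm_le_iff_of_nonneg hε.le]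
  intro j
  rw [Pi.sub_apply, Real.norm_eq_abs]
  cases i with
  | zero =>
      have hgoal : piBar pb qb Cbar Kbar 0 j
          = pb * Cbar j + qb * Kbar 1 j + (1 - pb - qb) * Kbar 0 j := by
        simp [piBar]
      rw [hgoal]
      exact component_lemma ε _ p q pb qb (C j) (K 1 j) (K 0 j) (Cbar j) (Kbar 1 j)
        (Kbar 0 j) hε hε14 rfl hpbv (hC j) (hK 1 j) (hK 0 j) (hCbv j) (hKbv 1 j)
        (hKbv 0 j) hp hq hpd hqd (hCc j) (hKc 1 j) (hKc 0 j)
  | succ n =>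
      have hgoal : piBar pb qb Cbar Kbar (n+1) j
          = pb * Kbar n j + qb * Kbar (n+2) j + (1 - pb - qb) * Kbar (n+1) j := by
        simp [piBar]
      rw [hgoal]
      exact component_lemma ε _ p q pb qb (K n j) (K (n+2) j) (K (n+1) j) (Kbar n j)
        (Kbar (n+2) j) (Kbar (n+1) j) hε hε14 rfl hpbv (hK n j) (hK (n+2) j)
        (hK (n+1) j) (hKbv n j) (hKbv (n+2) j) (hKbv (n+1) j) hp hq hpd hqd
        (hKc n j) (hKc (n+2) j) (hKc (n+1) j)
end
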